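/- Let R be an algebra of type (𝒢, m, n) and suppose [k] = S ⊔ T is a partition of {1,…,k} into two disjoint subsets, each of which is a subgee. Then the product of the k+1 zero divisors V̄_S · (W_S⊗1 − 1⊗W_S) · V̄_T is nonzero in R ⊗̂ R; indeed, its expansion in the tensor-product basis contains the basis term W_∅ ⊗ V_T with nonzero coefficient, and this term cannot be cancelled. -/

import Mathlib

open scoped TensorProduct

/-- `[k] = {1,…,k}` as a finset of positive integers. -/
def bra (k : ℕ) : Finset ℕ+ := (Finset.range k).image (fun i => ⟨i + 1, i.succ_pos⟩)

/-- The domination order on finite multisets of positive integers: `MLE S T` holds iff there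
is a submultiset `T'` of `T` that can be matched up with `S` so that each element of `S` is
at most its partner in `T'`. -/
def MLE (S T : Multiset ℕ+) : Prop := ∃ T' ≤ T, Multiset.Rel (· ≤ ·) S T'

/-- `S` is a subgee of the collection `𝒢` of gees. -/
def Subgee (𝒢 : Finset (Finset ℕ+)) (S : Finset ℕ+) : Prop := ∃ G ∈ 𝒢, MLE S.val G.val

/-- `rho i T` is the number of elements of `T` greater than `i`. -/
def rho (i : ℕ+) (T : Finset ℕ+) : ℕ := (T.filter (fun t => i < t)).card

/-- The ordered monomial `V_S = V_{s₁} ⋯ V_{s_k}` for `S = {s₁ < ⋯ < s_k}`. -/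
def VSmon {R : Type} [Ring R] (V : ℕ+ → R) (S : Finset ℕ+) : R :=
  ((S.sort (· ≤ ·)).map V).prod

/-- An algebra of type `(𝒢, m, n)`. -/
structure IsPolygonAlgebra (n m : ℕ) (𝒢 : Finset (Finset ℕ+))
    (R : Type) [Ring R] [Algebra ℚ R] [FiniteDimensional ℚ R]
    (𝒜 : ℕ → Submodule ℚ R) [GradedAlgebra 𝒜]
    (V : ℕ+ → R) (W : Finset ℕ+ → R) : Prop where
  hn : 4 ≤ n
  hm : 1 ≤ m
  gee_nonempty : 𝒢.Nonempty
  gee_sub : ∀ G ∈ 𝒢, G ⊆ bra (n - 1)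
  gee_incomp : ∀ G ∈ 𝒢, ∀ G' ∈ 𝒢, MLE G.val G'.val → G = G'
  gee_card : ∀ G ∈ 𝒢, G.card ≤ m - 1
  gcomm : ∀ (i j : ℕ) (x y : R), x ∈ 𝒜 i → y ∈ 𝒜 j →
    x * y = ((-1 : ℚ)) ^ (i * j) • (y * x)
  V_mem : ∀ i : ℕ+, (i : ℕ) ≤ n - 1 → V i ∈ 𝒜 1
  W_mem : ∀ S : Finset ℕ+, Subgee 𝒢 S → W S ∈ 𝒜 (m - S.card)
  VS_ne : ∀ S : Finset ℕ+, S ⊆ bra (n - 1) → (VSmon V S ≠ 0 ↔ Subgee 𝒢 S)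
  basis_indep : LinearIndependent ℚ
    (Sum.elim (fun S : {S : Finset ℕ+ // Subgee 𝒢 S} => VSmon V S.1)
      (fun S : {S : Finset ℕ+ // Subgee 𝒢 S} => W S.1))
  basis_span : Submodule.span ℚ (Set.range
    (Sum.elim (fun S : {S : Finset ℕ+ // Subgee 𝒢 S} => VSmon V S.1)
      (fun S : {S : Finset ℕ+ // Subgee 𝒢 S} => W S.1))) = ⊤
  VW : ∀ S S' : Finset ℕ+, Subgee 𝒢 S → Subgee 𝒢 S' → S.card = S'.card →
    VSmon V S * W S' = if S = S' then W ∅ else 0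
  WW : ∀ S S' : Finset ℕ+, Subgee 𝒢 S → Subgee 𝒢 S' → S.card + S'.card = m →
    W S * W S' = 0

/-- `R` has no exotic products. -/
def NoExoticProducts (n : ℕ) (𝒢 : Finset (Finset ℕ+))
    {R : Type} [Ring R] [Algebra ℚ R] (V : ℕ+ → R) (W : Finset ℕ+ → R) : Prop :=
  (∀ S S' : Finset ℕ+, Subgee 𝒢 S → Subgee 𝒢 S' → W S * W S' = 0) ∧
  (∀ i : ℕ+, (i : ℕ) ≤ n - 1 → ∀ S : Finset ℕ+, Subgee 𝒢 S →
    (i ∈ S → V i * W S = ((-1 : ℚ)) ^ (rho i (S.erase i)) • W (S.erase i)) ∧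
    (i ∉ S → V i * W S = 0))

section Tensor

variable {R : Type} [Ring R] [Algebra ℚ R] (𝒜 : ℕ → Submodule ℚ R) [GradedAlgebra 𝒜]

/-- The multiplication map `μ : R ⊗̂ R → R`. -/
noncomputable def muMap : (𝒜 ᵍ⊗[ℚ] 𝒜) →ₗ[ℚ] R :=
  (LinearMap.mul' ℚ R).comp (GradedTensorProduct.of ℚ 𝒜 𝒜).symm.toLinearMap

/-- `x ⊗ y` as an element of the graded tensor product `R ⊗̂ R`. -/
noncomputable def tm (x y : R) : 𝒜 ᵍ⊗[ℚ] 𝒜 := GradedTensorProduct.of ℚ 𝒜 𝒜 (x ⊗ₜ y)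

/-- `ū = u ⊗ 1 - 1 ⊗ u`. -/
noncomputable def ubar (u : R) : 𝒜 ᵍ⊗[ℚ] 𝒜 := tm 𝒜 u 1 - tm 𝒜 1 u

/-- `V̄_D = ∏_{i ∈ D} V̄ᵢ` with factors in increasing order of `i`. -/
noncomputable def Vbar (V : ℕ+ → R) (D : Finset ℕ+) : 𝒜 ᵍ⊗[ℚ] 𝒜 :=
  ((D.sort (· ≤ ·)).map (fun i => ubar 𝒜 (V i))).prod

/-- The set of `k` such that some product of `k` zero divisors in `R ⊗̂ R` is nonzero;
`zcl R` is the greatest element of this set. -/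
def zclSet : Set ℕ :=
  {k : ℕ | ∃ L : List (𝒜 ᵍ⊗[ℚ] 𝒜), L.length = k ∧
    (∀ x ∈ L, muMap 𝒜 x = 0) ∧ L.prod ≠ 0}

end Tensor

/-!
Pair the product with the functional `W_∅^* ⊗ V_T^*` built from the coordinates of the basis of
`V`- and `W`-monomials. Modulo tensors `V_U ⊗ V_{U'}` with `T ⊄ U'`, one has
`V̄_T ≡ (-1)^|T| (1 ⊗ V_T)`. Multiplying by `W̄_S` and then by the factors `V̄_i`, `i ∈ S`, which
avoid `T`, maps all error terms into the span of tensors whose left factor is a `V`-monomial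
(killed by `W_∅^*`) or whose right factor is a `V`-monomial other than `V_T` (killed by `V_T^*`).
The surviving term is `(-1)^|T| V_S W_S ⊗ V_T = (-1)^|T| W_∅ ⊗ V_T`, which pairs to `±1`.
-/

open GradedTensorProduct

lemma mem_bra {i : ℕ+} {k : ℕ} : i ∈ bra k ↔ (i : ℕ) ≤ k := by
  constructor
  · intro hi
    obtain ⟨j, hj, rfl⟩ := Finset.mem_image.mp hi
    exact Finset.mem_range.mp hj
  · intro hi
    have := i.pos
    exact Finset.mem_image.mpr
      ⟨(i : ℕ) - 1, Finset.mem_range.mpr (by omega), PNat.eq (Nat.sub_add_cancel this)⟩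

lemma MLE.exists_le_of_mem {S T : Multiset ℕ+} (h : MLE S T) {a : ℕ+} (ha : a ∈ S) :
    ∃ b ∈ T, a ≤ b := by
  obtain ⟨T', hT', hrel⟩ := h
  obtain ⟨b, hb, hab⟩ := Multiset.exists_mem_of_rel_of_mem hrel ha
  exact ⟨b, Multiset.mem_of_le hT' hb, hab⟩

lemma Subgee.subset_bra {𝒢 : Finset (Finset ℕ+)} {N : ℕ} (h𝒢 : ∀ G ∈ 𝒢, G ⊆ bra N)
    {S : Finset ℕ+} (hS : Subgee 𝒢 S) : S ⊆ bra N := by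
  intro a ha
  obtain ⟨G, hG, hSG⟩ := hS
  obtain ⟨b, hb, hab⟩ := hSG.exists_le_of_mem ha
  exact mem_bra.mpr (((PNat.coe_le_coe a b).mpr hab).trans (mem_bra.mp (h𝒢 G hG hb)))

lemma subgee_empty {𝒢 : Finset (Finset ℕ+)} (h𝒢 : 𝒢.Nonempty) : Subgee 𝒢 ∅ := by
  obtain ⟨G, hG⟩ := h𝒢
  exact ⟨G, hG, 0, Multiset.zero_le _, Multiset.Rel.zero⟩

lemma prod_map_sort_insert_of_forall_lt {α M : Type*} [LinearOrder α] [Monoid M] (f : α → M)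
    {a : α} {s : Finset α} (h : ∀ x ∈ s, a < x) :
    (((insert a s).sort (· ≤ ·)).map f).prod = f a * ((s.sort (· ≤ ·)).map f).prod := by
  rw [Finset.sort_insert (r := (· ≤ ·)) (fun x hx => (h x hx).le)
    (fun ha => lt_irrefl a (h a ha)), List.map_cons, List.prod_cons]

section Monomials

variable {R : Type} [Ring R] (V : ℕ+ → R)

@[simp]
lemma VSmon_empty : VSmon V ∅ = 1 := by
  simp [VSmon]

lemma VSmon_singleton (a : ℕ+) : VSmon V {a} = V a := by
  simp [VSmon]

lemma VSmon_insert_of_forall_lt {a : ℕ+} {s : Finset ℕ+} (h : ∀ x ∈ s, a < x) :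
    VSmon V (insert a s) = V a * VSmon V s :=
  prod_map_sort_insert_of_forall_lt V h

variable {V}

lemma exists_mul_VSmon_eq_zsmul {B : Finset ℕ+} (hsq : ∀ i ∈ B, V i * V i = 0)
    (hanti : ∀ i ∈ B, ∀ j ∈ B, V i * V j = -(V j * V i)) {i : ℕ+} (hi : i ∈ B)
    {U : Finset ℕ+} (hU : U ⊆ B) : ∃ c : ℤ, V i * VSmon V U = c • VSmon V (insert i U) := by
  induction U using Finset.induction_on_min with
  | empty => exact ⟨1, by simp [VSmon]⟩
  | insert a s has ih =>
    have ha : a ∈ B := hU (Finset.mem_insert_self a s)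
    obtain ⟨c, hc⟩ := ih ((Finset.subset_insert a s).trans hU)
    rw [VSmon_insert_of_forall_lt V has]
    rcases lt_trichotomy i a with hia | rfl | hai
    · refine ⟨1, ?_⟩
      rw [one_smul, VSmon_insert_of_forall_lt V, VSmon_insert_of_forall_lt V has]
      simpa [hia] using fun x hx => hia.trans (has x hx)
    · exact ⟨0, by rw [← mul_assoc, hsq i hi, zero_mul, zero_smul]⟩
    · refine ⟨-c, ?_⟩
      rw [Finset.insert_comm, VSmon_insert_of_forall_lt V (a := a), ← mul_assoc,
        hanti i hi a ha, neg_mul, mul_assoc, hc, mul_smul_comm, neg_smul]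
      simpa [hai] using has

end Monomials

section GradedTensor

variable {R : Type} [Ring R] [Algebra ℚ R] {𝒜 : ℕ → Submodule ℚ R} [GradedAlgebra 𝒜]

lemma Vbar_insert_of_forall_lt (V : ℕ+ → R) {a : ℕ+} {s : Finset ℕ+} (h : ∀ x ∈ s, a < x) :
    Vbar 𝒜 V (insert a s) = ubar 𝒜 (V a) * Vbar 𝒜 V s :=
  prod_map_sort_insert_of_forall_lt _ h

lemma ubar_mul_tmul {i j : ℕ} {u x : R} (hu : u ∈ 𝒜 j) (hx : x ∈ 𝒜 i) (y : R) :
    ubar 𝒜 u * (x ᵍ⊗ₜ[ℚ] y) = (u * x) ᵍ⊗ₜ y - (-1 : ℤˣ) ^ (j * i) • (x ᵍ⊗ₜ (u * y)) := by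
  have hleft := tmul_one_mul_coe_tmul 𝒜 𝒜 u ⟨x, hx⟩ y
  have hright := tmul_coe_mul_coe_tmul 𝒜 𝒜 1 ⟨u, hu⟩ ⟨x, hx⟩ y
  rw [one_mul] at hright
  rw [ubar, tm, tm, sub_mul]
  exact congrArg₂ (· - ·) hleft hright

lemma zsmul_tmul (c : ℤ) (x y : R) : (c • x) ᵍ⊗ₜ[ℚ] y = c • (x ᵍ⊗ₜ[ℚ] y : 𝒜 ᵍ⊗[ℚ] 𝒜) := by
  rw [← map_zsmul, TensorProduct.smul_tmul']

lemma tmul_zsmul (c : ℤ) (x y : R) : x ᵍ⊗ₜ[ℚ] (c • y) = c • (x ᵍ⊗ₜ[ℚ] y : 𝒜 ᵍ⊗[ℚ] 𝒜) := by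
  rw [← map_zsmul, ← TensorProduct.tmul_smul]

variable (𝒜) in
noncomputable def tensorPairing (f g : R →ₗ[ℚ] ℚ) : (𝒜 ᵍ⊗[ℚ] 𝒜) →ₗ[ℚ] ℚ :=
  TensorProduct.lid ℚ ℚ ∘ₗ TensorProduct.map f g ∘ₗ (of ℚ 𝒜 𝒜).symm.toLinearMap

lemma tensorPairing_tmul (f g : R →ₗ[ℚ] ℚ) (x y : R) :
    tensorPairing 𝒜 f g (x ᵍ⊗ₜ[ℚ] y) = f x * g y := rfl

end GradedTensor

lemma mul_mem_of_mem_span {k A : Type*} [CommSemiring k] [Semiring A] [Algebra k A]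
    {s : Set A} {K : Submodule k A} {u : A} (h : ∀ x ∈ s, u * x ∈ K) {z : A}
    (hz : z ∈ Submodule.span k s) : u * z ∈ K :=
  (Submodule.span_le (p := K.comap (LinearMap.mulLeft k u))).mpr h hz

section Spans

variable {R : Type} [Ring R] [Algebra ℚ R] (𝒜 : ℕ → Submodule ℚ R) [GradedAlgebra 𝒜]
  (V : ℕ+ → R) (B : Finset ℕ+)

noncomputable def vbarErrorSpan (F : Finset ℕ+) : Submodule ℚ (𝒜 ᵍ⊗[ℚ] 𝒜) :=
  Submodule.span ℚ {z | ∃ U ⊆ B, ∃ U' ⊆ B, ¬ F ⊆ U' ∧ z = VSmon V U ᵍ⊗ₜ VSmon V U'}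

/-- Tensors whose coefficient on `W_∅ ⊗ V_T` vanishes for a visible reason. -/
noncomputable def negligibleSpan (T : Finset ℕ+) : Submodule ℚ (𝒜 ᵍ⊗[ℚ] 𝒜) :=
  Submodule.span ℚ ({z | ∃ U ⊆ B, ∃ y : R, z = VSmon V U ᵍ⊗ₜ y} ∪
    {z | ∃ U ⊆ B, U ≠ T ∧ ∃ (d : ℕ) (x : R), x ∈ 𝒜 d ∧ z = x ᵍ⊗ₜ VSmon V U})

variable {𝒜 V B}

lemma VSmon_tmul_VSmon_mem_vbarErrorSpan {F U U' : Finset ℕ+} (hU : U ⊆ B) (hU' : U' ⊆ B)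
    (hFU' : ¬ F ⊆ U') : VSmon V U ᵍ⊗ₜ[ℚ] VSmon V U' ∈ vbarErrorSpan 𝒜 V B F :=
  Submodule.subset_span ⟨U, hU, U', hU', hFU', rfl⟩

lemma VSmon_tmul_mem_negligibleSpan {T U : Finset ℕ+} (hU : U ⊆ B) (y : R) :
    VSmon V U ᵍ⊗ₜ[ℚ] y ∈ negligibleSpan 𝒜 V B T :=
  Submodule.subset_span (Or.inl ⟨U, hU, y, rfl⟩)

lemma tmul_VSmon_mem_negligibleSpan {T U : Finset ℕ+} {d : ℕ} {x : R} (hx : x ∈ 𝒜 d)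
    (hU : U ⊆ B) (hUT : U ≠ T) : x ᵍ⊗ₜ[ℚ] VSmon V U ∈ negligibleSpan 𝒜 V B T :=
  Submodule.subset_span (Or.inr ⟨U, hU, hUT, d, x, hx, rfl⟩)

lemma tensorPairing_eq_zero_of_mem_negligibleSpan {T : Finset ℕ+} {f g : R →ₗ[ℚ] ℚ}
    (hf : ∀ U ⊆ B, f (VSmon V U) = 0) (hg : ∀ U ⊆ B, U ≠ T → g (VSmon V U) = 0)
    {z : 𝒜 ᵍ⊗[ℚ] 𝒜} (hz : z ∈ negligibleSpan 𝒜 V B T) : tensorPairing 𝒜 f g z = 0 := by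
  refine (Submodule.span_le (p := LinearMap.ker (tensorPairing 𝒜 f g))).mpr ?_ hz
  rintro _ (⟨U, hU, y, rfl⟩ | ⟨U, hU, hUT, d, x, -, rfl⟩)
  · rw [SetLike.mem_coe, LinearMap.mem_ker, tensorPairing_tmul, hf U hU, zero_mul]
  · rw [SetLike.mem_coe, LinearMap.mem_ker, tensorPairing_tmul, hg U hU hUT, mul_zero]

end Spans

structure IsAnticommutingFamily {R : Type} [Ring R] [Algebra ℚ R] (𝒜 : ℕ → Submodule ℚ R)
    (V : ℕ+ → R) (B : Finset ℕ+) : Prop where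
  mem : ∀ i ∈ B, V i ∈ 𝒜 1
  anticomm : ∀ i ∈ B, ∀ j ∈ B, V i * V j = -(V j * V i)

namespace IsAnticommutingFamily

variable {R : Type} [Ring R] [Algebra ℚ R] {𝒜 : ℕ → Submodule ℚ R} {V : ℕ+ → R}
  {B : Finset ℕ+}

lemma mul_self (hV : IsAnticommutingFamily 𝒜 V B) {i : ℕ+} (hi : i ∈ B) : V i * V i = 0 := by
  have h2 : (2 : ℚ) • (V i * V i) = 0 := by
    rw [two_smul]
    nth_rewrite 1 [hV.anticomm i hi i hi]
    exact neg_add_cancel _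
  exact (smul_eq_zero.mp h2).resolve_left two_ne_zero

lemma exists_mul_VSmon (hV : IsAnticommutingFamily 𝒜 V B) {i : ℕ+} (hi : i ∈ B)
    {U : Finset ℕ+} (hU : U ⊆ B) : ∃ c : ℤ, V i * VSmon V U = c • VSmon V (insert i U) :=
  exists_mul_VSmon_eq_zsmul (fun _ hj => hV.mul_self hj) hV.anticomm hi hU

variable [GradedAlgebra 𝒜]

lemma VSmon_mem (hV : IsAnticommutingFamily 𝒜 V B) {U : Finset ℕ+} (hU : U ⊆ B) :
    VSmon V U ∈ 𝒜 U.card := by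
  have := SetLike.list_prod_map_mem_graded (A := 𝒜) (U.sort (· ≤ ·)) (fun _ => 1) V
    (fun i hi => hV.mem i (hU ((Finset.mem_sort _).mp hi)))
  simpa [VSmon] using this

lemma ubar_mul_mem_vbarErrorSpan (hV : IsAnticommutingFamily 𝒜 V B) {a : ℕ+} (ha : a ∈ B)
    {F : Finset ℕ+} (haF : a ∉ F) {z : 𝒜 ᵍ⊗[ℚ] 𝒜} (hz : z ∈ vbarErrorSpan 𝒜 V B F) :
    ubar 𝒜 (V a) * z ∈ vbarErrorSpan 𝒜 V B (insert a F) := by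
  refine mul_mem_of_mem_span ?_ hz
  rintro _ ⟨U, hU, U', hU', hFU', rfl⟩
  obtain ⟨c, hc⟩ := hV.exists_mul_VSmon ha hU
  obtain ⟨c', hc'⟩ := hV.exists_mul_VSmon ha hU'
  have hleft := VSmon_tmul_VSmon_mem_vbarErrorSpan (𝒜 := 𝒜) (V := V)
    (Finset.insert_subset ha hU) hU' fun h => hFU' ((Finset.subset_insert a F).trans h)
  have hright := VSmon_tmul_VSmon_mem_vbarErrorSpan (𝒜 := 𝒜) (V := V) hU
    (Finset.insert_subset ha hU') (by rwa [Finset.insert_subset_insert_iff haF])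
  rw [ubar_mul_tmul (hV.mem a ha) (hV.VSmon_mem hU), hc, hc', zsmul_tmul, tmul_zsmul]
  exact sub_mem (zsmul_mem hleft c) (Submodule.smul_of_tower_mem _ _ (zsmul_mem hright c'))

lemma Vbar_sub_mem_vbarErrorSpan (hV : IsAnticommutingFamily 𝒜 V B) {F : Finset ℕ+}
    (hF : F ⊆ B) :
    Vbar 𝒜 V F - (-1 : ℚ) ^ F.card • ((1 : R) ᵍ⊗ₜ[ℚ] VSmon V F) ∈ vbarErrorSpan 𝒜 V B F := by
  induction F using Finset.induction_on_min with
  | empty =>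
    have h11 : (1 : 𝒜 ᵍ⊗[ℚ] 𝒜) - (1 : R) ᵍ⊗ₜ[ℚ] (1 : R) = 0 := sub_eq_zero.mpr rfl
    simp [Vbar, h11]
  | insert a s has ih =>
    have ha : a ∈ B := hF (Finset.mem_insert_self a s)
    have has' : a ∉ s := fun h => lt_irrefl a (has a h)
    have hsB : s ⊆ B := (Finset.subset_insert a s).trans hF
    have hleading : ubar 𝒜 (V a) * ((1 : R) ᵍ⊗ₜ[ℚ] VSmon V s)
        = V a ᵍ⊗ₜ VSmon V s - (1 : R) ᵍ⊗ₜ VSmon V (insert a s) := by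
      rw [ubar_mul_tmul (hV.mem a ha) SetLike.GradedOne.one_mem, mul_zero, pow_zero, one_smul,
        mul_one, VSmon_insert_of_forall_lt V has]
    have hsplit : Vbar 𝒜 V (insert a s)
          - (-1 : ℚ) ^ (insert a s).card • ((1 : R) ᵍ⊗ₜ[ℚ] VSmon V (insert a s))
        = (-1 : ℚ) ^ s.card • (VSmon V {a} ᵍ⊗ₜ VSmon V s)
          + ubar 𝒜 (V a) * (Vbar 𝒜 V s - (-1 : ℚ) ^ s.card • ((1 : R) ᵍ⊗ₜ[ℚ] VSmon V s)) := by
      rw [Vbar_insert_of_forall_lt V has, mul_sub, mul_smul_comm, hleading,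
        Finset.card_insert_of_notMem has', pow_succ, VSmon_singleton, mul_neg_one, neg_smul,
        smul_sub]
      abel
    have hnew := VSmon_tmul_VSmon_mem_vbarErrorSpan (𝒜 := 𝒜) (V := V)
      (Finset.singleton_subset_iff.mpr ha) hsB fun h => has' (h (Finset.mem_insert_self a s))
    rw [hsplit]
    exact add_mem (Submodule.smul_mem _ _ hnew) (hV.ubar_mul_mem_vbarErrorSpan ha has' (ih hsB))

lemma ubar_mul_mem_negligibleSpan_of_mem_vbarErrorSpan (hV : IsAnticommutingFamily 𝒜 V B)
    {d : ℕ} {w : R} (hw : w ∈ 𝒜 d) {T : Finset ℕ+} {z : 𝒜 ᵍ⊗[ℚ] 𝒜}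
    (hz : z ∈ vbarErrorSpan 𝒜 V B T) : ubar 𝒜 w * z ∈ negligibleSpan 𝒜 V B T := by
  refine mul_mem_of_mem_span ?_ hz
  rintro _ ⟨U, hU, U', hU', hTU', rfl⟩
  have hleft := tmul_VSmon_mem_negligibleSpan (V := V)
    (SetLike.mul_mem_graded hw (hV.VSmon_mem hU)) hU' fun h => hTU' h.ge
  rw [ubar_mul_tmul hw (hV.VSmon_mem hU)]
  exact sub_mem hleft (Submodule.smul_of_tower_mem _ _ (VSmon_tmul_mem_negligibleSpan hU _))

lemma ubar_mul_mem_negligibleSpan (hV : IsAnticommutingFamily 𝒜 V B) {i : ℕ+} (hi : i ∈ B)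
    {T : Finset ℕ+} (hiT : i ∉ T) {z : 𝒜 ᵍ⊗[ℚ] 𝒜} (hz : z ∈ negligibleSpan 𝒜 V B T) :
    ubar 𝒜 (V i) * z ∈ negligibleSpan 𝒜 V B T := by
  refine mul_mem_of_mem_span ?_ hz
  rintro _ (⟨U, hU, y, rfl⟩ | ⟨U, hU, hUT, d, x, hx, rfl⟩)
  · obtain ⟨c, hc⟩ := hV.exists_mul_VSmon hi hU
    have hleft := VSmon_tmul_mem_negligibleSpan (𝒜 := 𝒜) (V := V) (T := T)
      (Finset.insert_subset hi hU) y
    rw [ubar_mul_tmul (hV.mem i hi) (hV.VSmon_mem hU), hc, zsmul_tmul]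
    exact sub_mem (zsmul_mem hleft c)
      (Submodule.smul_of_tower_mem _ _ (VSmon_tmul_mem_negligibleSpan hU _))
  · obtain ⟨c, hc⟩ := hV.exists_mul_VSmon hi hU
    have hleft := tmul_VSmon_mem_negligibleSpan (V := V)
      (SetLike.mul_mem_graded (hV.mem i hi) hx) hU hUT
    have hright := tmul_VSmon_mem_negligibleSpan (V := V) hx (Finset.insert_subset hi hU)
      (ne_of_mem_of_not_mem' (Finset.mem_insert_self i U) hiT)
    rw [ubar_mul_tmul (hV.mem i hi) hx, hc, tmul_zsmul]
    exact sub_mem hleft (Submodule.smul_of_tower_mem _ _ (zsmul_mem hright c))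

lemma Vbar_mul_mem_negligibleSpan (hV : IsAnticommutingFamily 𝒜 V B) {D T : Finset ℕ+}
    (hD : D ⊆ B) (hDT : Disjoint D T) {z : 𝒜 ᵍ⊗[ℚ] 𝒜} (hz : z ∈ negligibleSpan 𝒜 V B T) :
    Vbar 𝒜 V D * z ∈ negligibleSpan 𝒜 V B T := by
  induction D using Finset.induction_on_min with
  | empty => simpa [Vbar] using hz
  | insert a s has ih =>
    rw [Finset.insert_subset_iff] at hD
    rw [Finset.disjoint_insert_left] at hDT
    rw [Vbar_insert_of_forall_lt V has, mul_assoc]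
    exact hV.ubar_mul_mem_negligibleSpan hD.1 hDT.1 (ih hD.2 hDT.2)

lemma Vbar_mul_tmul_sub_mem (hV : IsAnticommutingFamily 𝒜 V B) {D T : Finset ℕ+}
    (hD : D ⊆ B) (hT : T ⊆ B) (hDT : Disjoint D T) {d : ℕ} {x : R} (hx : x ∈ 𝒜 d) :
    Vbar 𝒜 V D * (x ᵍ⊗ₜ[ℚ] VSmon V T) - (VSmon V D * x) ᵍ⊗ₜ VSmon V T
      ∈ negligibleSpan 𝒜 V B T := by
  induction D using Finset.induction_on_min with
  | empty => simp [Vbar]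
  | insert a s has ih =>
    rw [Finset.insert_subset_iff] at hD
    rw [Finset.disjoint_insert_left] at hDT
    obtain ⟨c, hc⟩ := hV.exists_mul_VSmon hD.1 hT
    have hsx : VSmon V s * x ∈ 𝒜 (s.card + d) := SetLike.mul_mem_graded (hV.VSmon_mem hD.2) hx
    have hsplit : Vbar 𝒜 V (insert a s) * (x ᵍ⊗ₜ[ℚ] VSmon V T)
          - (VSmon V (insert a s) * x) ᵍ⊗ₜ VSmon V T
        = ubar 𝒜 (V a) * (Vbar 𝒜 V s * (x ᵍ⊗ₜ[ℚ] VSmon V T) - (VSmon V s * x) ᵍ⊗ₜ VSmon V T)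
          - (-1 : ℤˣ) ^ (1 * (s.card + d))
            • (c • ((VSmon V s * x) ᵍ⊗ₜ VSmon V (insert a T))) := by
      rw [Vbar_insert_of_forall_lt V has, VSmon_insert_of_forall_lt V has, mul_sub,
        ubar_mul_tmul (hV.mem a hD.1) hsx, hc, tmul_zsmul, mul_assoc, mul_assoc]
      abel
    have hnew := tmul_VSmon_mem_negligibleSpan (V := V) hsx (Finset.insert_subset hD.1 hT)
      (ne_of_mem_of_not_mem' (Finset.mem_insert_self a T) hDT.1)
    rw [hsplit]
    exact sub_mem (hV.ubar_mul_mem_negligibleSpan hD.1 hDT.1 (ih hD.2 hDT.2))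
      (Submodule.smul_of_tower_mem _ _ (zsmul_mem hnew c))

lemma Vbar_mul_ubar_mul_Vbar_sub_mem (hV : IsAnticommutingFamily 𝒜 V B) {S T : Finset ℕ+}
    (hS : S ⊆ B) (hT : T ⊆ B) (hST : Disjoint S T) {d : ℕ} {w : R} (hw : w ∈ 𝒜 d) :
    Vbar 𝒜 V S * ubar 𝒜 w * Vbar 𝒜 V T
        - (-1 : ℚ) ^ T.card • ((VSmon V S * w) ᵍ⊗ₜ VSmon V T)
      ∈ negligibleSpan 𝒜 V B T := by
  have hright : ubar 𝒜 w * Vbar 𝒜 V T - (-1 : ℚ) ^ T.card • (w ᵍ⊗ₜ[ℚ] VSmon V T)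
      ∈ negligibleSpan 𝒜 V B T := by
    have hsplit : ubar 𝒜 w * Vbar 𝒜 V T - (-1 : ℚ) ^ T.card • (w ᵍ⊗ₜ[ℚ] VSmon V T)
        = ubar 𝒜 w * (Vbar 𝒜 V T - (-1 : ℚ) ^ T.card • ((1 : R) ᵍ⊗ₜ[ℚ] VSmon V T))
          - (-1 : ℚ) ^ T.card • (VSmon V ∅ ᵍ⊗ₜ (w * VSmon V T)) := by
      rw [mul_sub, mul_smul_comm, ubar_mul_tmul hw SetLike.GradedOne.one_mem, mul_zero,
        pow_zero, one_smul, mul_one, VSmon_empty, smul_sub]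
      abel
    rw [hsplit]
    exact sub_mem (hV.ubar_mul_mem_negligibleSpan_of_mem_vbarErrorSpan hw
      (hV.Vbar_sub_mem_vbarErrorSpan hT))
      (Submodule.smul_mem _ _ (VSmon_tmul_mem_negligibleSpan (Finset.empty_subset B) _))
  have hsplit : Vbar 𝒜 V S * ubar 𝒜 w * Vbar 𝒜 V T
        - (-1 : ℚ) ^ T.card • ((VSmon V S * w) ᵍ⊗ₜ VSmon V T)
      = Vbar 𝒜 V S * (ubar 𝒜 w * Vbar 𝒜 V T - (-1 : ℚ) ^ T.card • (w ᵍ⊗ₜ[ℚ] VSmon V T))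
        + (-1 : ℚ) ^ T.card • (Vbar 𝒜 V S * (w ᵍ⊗ₜ[ℚ] VSmon V T)
          - (VSmon V S * w) ᵍ⊗ₜ VSmon V T) := by
    rw [mul_sub, mul_smul_comm, smul_sub, mul_assoc]
    abel
  rw [hsplit]
  exact add_mem (hV.Vbar_mul_mem_negligibleSpan hS hST hright)
    (Submodule.smul_mem _ _ (hV.Vbar_mul_tmul_sub_mem hS hT hST hw))

end IsAnticommutingFamily

namespace IsPolygonAlgebra

variable {n m : ℕ} {𝒢 : Finset (Finset ℕ+)} {R : Type} [Ring R] [Algebra ℚ R]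
  [FiniteDimensional ℚ R] {𝒜 : ℕ → Submodule ℚ R} [GradedAlgebra 𝒜] {V : ℕ+ → R}
  {W : Finset ℕ+ → R}

lemma isAnticommutingFamily (h : IsPolygonAlgebra n m 𝒢 R 𝒜 V W) :
    IsAnticommutingFamily 𝒜 V (bra (n - 1)) where
  mem i hi := h.V_mem i (mem_bra.mp hi)
  anticomm i hi j hj := by
    simpa using h.gcomm 1 1 (V i) (V j) (h.V_mem i (mem_bra.mp hi)) (h.V_mem j (mem_bra.mp hj))

lemma subgee_subset_bra (h : IsPolygonAlgebra n m 𝒢 R 𝒜 V W) {S : Finset ℕ+}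
    (hS : Subgee 𝒢 S) : S ⊆ bra (n - 1) :=
  hS.subset_bra h.gee_sub

lemma VSmon_mul_W_self (h : IsPolygonAlgebra n m 𝒢 R 𝒜 V W) {S : Finset ℕ+}
    (hS : Subgee 𝒢 S) : VSmon V S * W S = W ∅ := by
  simpa using h.VW S S hS hS rfl

noncomputable def basis (h : IsPolygonAlgebra n m 𝒢 R 𝒜 V W) :
    Module.Basis ({S // Subgee 𝒢 S} ⊕ {S // Subgee 𝒢 S}) ℚ R :=
  Module.Basis.mk h.basis_indep h.basis_span.ge

lemma basis_inl (h : IsPolygonAlgebra n m 𝒢 R 𝒜 V W) (S : {S // Subgee 𝒢 S}) :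
    h.basis (Sum.inl S) = VSmon V S := by
  simp [basis]

lemma basis_inr (h : IsPolygonAlgebra n m 𝒢 R 𝒜 V W) (S : {S // Subgee 𝒢 S}) :
    h.basis (Sum.inr S) = W S := by
  simp [basis]

lemma basis_coord_inl_VSmon (h : IsPolygonAlgebra n m 𝒢 R 𝒜 V W) {S : Finset ℕ+}
    (hS : Subgee 𝒢 S) : h.basis.coord (Sum.inl ⟨S, hS⟩) (VSmon V S) = 1 := by
  rw [← h.basis_inl ⟨S, hS⟩, Module.Basis.coord_apply, Module.Basis.repr_self,
    Finsupp.single_eq_same]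

lemma basis_coord_inr_W (h : IsPolygonAlgebra n m 𝒢 R 𝒜 V W) {S : Finset ℕ+}
    (hS : Subgee 𝒢 S) : h.basis.coord (Sum.inr ⟨S, hS⟩) (W S) = 1 := by
  rw [← h.basis_inr ⟨S, hS⟩, Module.Basis.coord_apply, Module.Basis.repr_self,
    Finsupp.single_eq_same]

lemma basis_coord_VSmon_eq_zero (h : IsPolygonAlgebra n m 𝒢 R 𝒜 V W) {U : Finset ℕ+}
    (hU : U ⊆ bra (n - 1)) {j : {S // Subgee 𝒢 S} ⊕ {S // Subgee 𝒢 S}}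
    (hj : ∀ hsg : Subgee 𝒢 U, Sum.inl ⟨U, hsg⟩ ≠ j) : h.basis.coord j (VSmon V U) = 0 := by
  by_cases hsg : Subgee 𝒢 U
  · rw [← h.basis_inl ⟨U, hsg⟩, Module.Basis.coord_apply, Module.Basis.repr_self,
      Finsupp.single_apply, if_neg (hj hsg)]
  · rw [not_ne_iff.mp (mt (h.VS_ne U hU).mp hsg), map_zero]

lemma basis_coord_inr_VSmon (h : IsPolygonAlgebra n m 𝒢 R 𝒜 V W) (S : {S // Subgee 𝒢 S})
    {U : Finset ℕ+} (hU : U ⊆ bra (n - 1)) : h.basis.coord (Sum.inr S) (VSmon V U) = 0 :=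
  h.basis_coord_VSmon_eq_zero hU fun _ => Sum.inl_ne_inr

lemma basis_coord_inl_VSmon_of_ne (h : IsPolygonAlgebra n m 𝒢 R 𝒜 V W) {T : Finset ℕ+}
    (hT : Subgee 𝒢 T) {U : Finset ℕ+} (hU : U ⊆ bra (n - 1)) (hUT : U ≠ T) :
    h.basis.coord (Sum.inl ⟨T, hT⟩) (VSmon V U) = 0 :=
  h.basis_coord_VSmon_eq_zero hU fun _ he => hUT (congrArg Subtype.val (Sum.inl_injective he))

end IsPolygonAlgebra

theorem stmt_10_general (n m : ℕ) (𝒢 : Finset (Finset ℕ+))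
    (R : Type) [Ring R] [Algebra ℚ R] [FiniteDimensional ℚ R]
    (𝒜 : ℕ → Submodule ℚ R) [GradedAlgebra 𝒜] (V : ℕ+ → R) (W : Finset ℕ+ → R)
    (h : IsPolygonAlgebra n m 𝒢 R 𝒜 V W)
    (S T : Finset ℕ+) (hdisj : Disjoint S T)
    (hS : Subgee 𝒢 S) (hT : Subgee 𝒢 T) :
    Vbar 𝒜 V S * ubar 𝒜 (W S) * Vbar 𝒜 V T ≠ 0 := by
  have hempty := subgee_empty h.gee_nonempty
  have hkey := h.isAnticommutingFamily.Vbar_mul_ubar_mul_Vbar_sub_mem (h.subgee_subset_bra hS)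
    (h.subgee_subset_bra hT) hdisj (h.W_mem S hS)
  rw [h.VSmon_mul_W_self hS] at hkey
  have hpair := tensorPairing_eq_zero_of_mem_negligibleSpan
    (fun U hU => h.basis_coord_inr_VSmon ⟨∅, hempty⟩ hU)
    (fun U hU hUT => h.basis_coord_inl_VSmon_of_ne hT hU hUT) hkey
  intro hzero
  rw [hzero, zero_sub, map_neg, map_smul, tensorPairing_tmul, h.basis_coord_inr_W hempty,
    h.basis_coord_inl_VSmon hT] at hpair
  simp at hpair

/-- If `[k] = S ⊔ T` with both `S` and `T` subgees, then the product of the `k + 1`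
zero divisors `V̄_S · (W_S ⊗ 1 − 1 ⊗ W_S) · V̄_T` is nonzero in `R ⊗̂ R`. -/
theorem stmt_10 (n m : ℕ) (𝒢 : Finset (Finset ℕ+))
    (R : Type) [Ring R] [Algebra ℚ R] [FiniteDimensional ℚ R]
    (𝒜 : ℕ → Submodule ℚ R) [GradedAlgebra 𝒜] (V : ℕ+ → R) (W : Finset ℕ+ → R)
    (h : IsPolygonAlgebra n m 𝒢 R 𝒜 V W)
    (k : ℕ) (S T : Finset ℕ+) (hdisj : Disjoint S T) (hunion : S ∪ T = bra k)
    (hS : Subgee 𝒢 S) (hT : Subgee 𝒢 T) :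
    Vbar 𝒜 V S * ubar 𝒜 (W S) * Vbar 𝒜 V T ≠ 0 :=
  stmt_10_general n m 𝒢 R 𝒜 V W h S T hdisj hS hT
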